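/- arXiv:2510.02944 — 3 statements merged into one kernel-verified Lean document; each statement's English description precedes it below -/
import Mathlib

section
/- Consider the Markov chain on [n] where at each step a pair (a,b) is chosen uniformly at random from [n]^2 and the current state j is resampled uniformly from {a,b} if j ∈ {a,b}, and left unchanged otherwise. Then for any initial state j_0 and any t ≥ 1, the total variation distance between the distribution of the state after t steps and the uniform distribution on [n] is at most (1 - 1/n)^t. -/
open Finset

/-- One-step transition probability for a single vertex occurrence under `T_{a,b}`. -/
noncomputable def Tstep {n : ℕ} (a b j j' : Fin n) : ℝ :=
  if j ≠ a ∧ j ≠ b then (if j' = j then 1 else 0)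
  else (if j' = a then 1/2 else 0) + (if j' = b then 1/2 else 0)

/-- Transition kernel of the single-vertex resampling Markov chain on `[n]`:
a pair `(a,b)` is chosen uniformly from `[n]^2` and the state is resampled uniformly
from `{a,b}` if it lies in `{a,b}`, else unchanged. -/
noncomputable def chainK {n : ℕ} (j j' : Fin n) : ℝ :=
  (1 / (n : ℝ)^2) * ∑ a : Fin n, ∑ b : Fin n, Tstep a b j j'

lemma TstepInnerSum {n : ℕ} (j j' a : Fin n) :
    ∑ b : Fin n, Tstep a b j j' =
      if a = j then (n:ℝ) * (if j' = j then 1/2 else 0) + 1/2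
      else (if j' = a then 1/2 else 0) + (if j' = j then 1/2 else 0)
        + ((n:ℝ)-1) * (if j' = j then 1 else 0) := by
  by_cases ha : a = j
  · subst ha
    simp [Tstep, Finset.sum_add_distrib, Finset.sum_ite_eq', mul_comm]
  · rw [if_neg ha, Fintype.sum_eq_add_sum_compl j (fun b => Tstep a b j j')]
    have h1 : Tstep a j j j' = (if j' = a then (1:ℝ)/2 else 0) + (if j' = j then 1/2 else 0) := by
      simp [Tstep]
    have h2 : ∀ b ∈ ({j}ᶜ : Finset (Fin n)), Tstep a b j j' = (if j' = j then (1:ℝ) else 0) := by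
      intro b hb
      simp only [Finset.mem_compl, Finset.mem_singleton] at hb
      have : j ≠ a ∧ j ≠ b := ⟨fun h => ha h.symm, fun h => hb h.symm⟩
      simp [Tstep, this]
    rw [h1, Finset.sum_congr rfl h2, Finset.sum_const]
    have hcard : ({j}ᶜ : Finset (Fin n)).card = n - 1 := by
      simp [Finset.card_compl]
    rw [hcard]
    have hn : 1 ≤ n := Nat.one_le_iff_ne_zero.mpr (by rintro rfl; exact j.elim0)
    have : ((n - 1 : ℕ) : ℝ) = (n:ℝ) - 1 := by
      push_cast [hn]
      ring
    rw [nsmul_eq_mul, this]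

lemma sum_sum_Tstep {n : ℕ} (j j' : Fin n) :
    ∑ a : Fin n, ∑ b : Fin n, Tstep a b j j' =
      if j' = j then ((n:ℝ)^2 - n + 1) else 1 := by
  rw [Finset.sum_congr rfl (fun a _ => TstepInnerSum j j' a)]
  rw [Fintype.sum_eq_add_sum_compl j]
  rw [if_pos rfl]
  have h2 : ∀ a ∈ ({j}ᶜ : Finset (Fin n)),
      (if a = j then (n:ℝ) * (if j' = j then 1/2 else 0) + 1/2
       else (if j' = a then 1/2 else 0) + (if j' = j then 1/2 else 0)
         + ((n:ℝ)-1) * (if j' = j then 1 else 0))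
      = (if j' = a then 1/2 else 0) + ((if j' = j then 1/2 else 0)
         + ((n:ℝ)-1) * (if j' = j then 1 else 0)) := by
    intro a ha
    simp only [Finset.mem_compl, Finset.mem_singleton] at ha
    rw [if_neg ha, add_assoc]
  rw [Finset.sum_congr rfl h2, Finset.sum_add_distrib, Finset.sum_const,
    Finset.sum_ite_eq ({j}ᶜ : Finset (Fin n)) j' (fun _ => (1:ℝ)/2)]
  have hcard : ({j}ᶜ : Finset (Fin n)).card = n - 1 := by simp [Finset.card_compl]
  have hn : 1 ≤ n := Nat.one_le_iff_ne_zero.mpr (by rintro rfl; exact j.elim0)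
  have hc : ((n - 1 : ℕ) : ℝ) = (n:ℝ) - 1 := by push_cast [hn]; ring
  rw [hcard, nsmul_eq_mul, hc]
  by_cases h : j' = j
  · simp [h]; ring
  · have : j' ∈ ({j}ᶜ : Finset (Fin n)) := by simpa using h
    rw [if_pos this]
    simp [h]
    norm_num

lemma chainK_eq {n : ℕ} (hn : 0 < n) (j j' : Fin n) :
    chainK j j' = (1 - 1/(n:ℝ)) * (if j' = j then 1 else 0) + 1/(n:ℝ)^2 := by
  have hn' : (n:ℝ) ≠ 0 := Nat.cast_ne_zero.mpr hn.ne'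
  rw [chainK, sum_sum_Tstep]
  by_cases h : j' = j <;> simp [h] <;> field_simp <;> ring

lemma chainK_row_sum {n : ℕ} (hn : 0 < n) (j : Fin n) :
    ∑ j' : Fin n, chainK j j' = 1 := by
  have hn' : (n:ℝ) ≠ 0 := Nat.cast_ne_zero.mpr hn.ne'
  rw [Finset.sum_congr rfl (fun j' _ => chainK_eq hn j j')]
  rw [Finset.sum_add_distrib, Finset.sum_const, ← Finset.mul_sum,
    Finset.sum_ite_eq' Finset.univ j (fun _ => (1:ℝ))]
  simp only [Finset.mem_univ, if_pos, Finset.card_univ, Fintype.card_fin, nsmul_eq_mul]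
  field_simp
  ring


/-- For any initial state `j0` and any `t ≥ 1`, the total variation distance
between the distribution of the state after `t` steps and uniform on `[n]` is at most
`(1 - 1/n)^t`. -/
theorem single_vertex_chain_mixing {n : ℕ} (hn : 0 < n) (j0 : Fin n) (t : ℕ) (ht : 1 ≤ t)
    (μ : ℕ → Fin n → ℝ)
    (h0 : μ 0 = fun j => if j = j0 then 1 else 0)
    (hstep : ∀ r j', μ (r + 1) j' = ∑ j : Fin n, μ r j * chainK j j') :
    (1/2) * ∑ x : Fin n, |μ t x - 1 / (n : ℝ)| ≤ (1 - 1 / (n : ℝ))^t := by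
  have hn' : (n:ℝ) ≠ 0 := Nat.cast_ne_zero.mpr hn.ne'
  have hn1 : (1:ℝ) ≤ (n:ℝ) := by exact_mod_cast hn
  -- total mass is 1 at every time
  have hmass : ∀ r, ∑ j : Fin n, μ r j = 1 := by
    intro r
    induction r with
    | zero => simp [h0]
    | succ r ih =>
      calc ∑ j' : Fin n, μ (r+1) j'
          = ∑ j' : Fin n, ∑ j : Fin n, μ r j * chainK j j' := by
            exact Finset.sum_congr rfl (fun j' _ => hstep r j')
        _ = ∑ j : Fin n, ∑ j' : Fin n, μ r j * chainK j j' := Finset.sum_comm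
        _ = ∑ j : Fin n, μ r j * ∑ j' : Fin n, chainK j j' := by
            exact Finset.sum_congr rfl (fun j _ => (Finset.mul_sum _ _ _).symm)
        _ = ∑ j : Fin n, μ r j := by
            exact Finset.sum_congr rfl (fun j _ => by rw [chainK_row_sum hn, mul_one])
        _ = 1 := ih
  -- one-step contraction
  have hcontr : ∀ r j, μ r j - 1/(n:ℝ) = (1 - 1/(n:ℝ))^r * (μ 0 j - 1/(n:ℝ)) := by
    intro r
    induction r with
    | zero => intro j; simp
    | succ r ih =>
      intro j'
      have key : μ (r+1) j' = (1 - 1/(n:ℝ)) * μ r j' + 1/(n:ℝ)^2 := by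
        rw [hstep r j']
        calc ∑ j : Fin n, μ r j * chainK j j'
            = ∑ j : Fin n, ((1 - 1/(n:ℝ)) * (μ r j * (if j' = j then 1 else 0))
                + μ r j * (1/(n:ℝ)^2)) := by
              refine Finset.sum_congr rfl (fun j _ => ?_)
              rw [chainK_eq hn j j']; ring
          _ = (1 - 1/(n:ℝ)) * (∑ j : Fin n, μ r j * (if j' = j then 1 else 0))
                + (∑ j : Fin n, μ r j) * (1/(n:ℝ)^2) := by
              rw [Finset.sum_add_distrib, Finset.mul_sum, Finset.sum_mul]
          _ = (1 - 1/(n:ℝ)) * μ r j' + 1/(n:ℝ)^2 := by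
              have hsel : (∑ j : Fin n, μ r j * (if j' = j then 1 else 0)) = μ r j' := by
                simp [mul_ite]
              rw [hmass r, hsel, one_mul]
      rw [key]
      have : (1 - 1/(n:ℝ)) * μ r j' + 1/(n:ℝ)^2 - 1/(n:ℝ)
          = (1 - 1/(n:ℝ)) * (μ r j' - 1/(n:ℝ)) := by field_simp; ring
      rw [this, ih j', pow_succ]
      ring
  -- finish
  have hpos : (0:ℝ) ≤ 1 - 1/(n:ℝ) := by
    have : 1/(n:ℝ) ≤ 1 := by
      rw [div_le_one (by positivity)]; exact hn1
    linarith
  have hsum0 : ∑ x : Fin n, |μ 0 x - 1/(n:ℝ)| ≤ 2 := by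
    have hb : ∀ x : Fin n, |μ 0 x - 1/(n:ℝ)| ≤ (if x = j0 then 1 else 0) + 1/(n:ℝ) := by
      intro x
      rw [h0]
      refine (abs_sub _ _).trans ?_
      have h1 : |if x = j0 then (1:ℝ) else 0| = if x = j0 then 1 else 0 := by
        split <;> simp
      have h2 : |1/(n:ℝ)| = 1/(n:ℝ) := abs_of_nonneg (by positivity)
      rw [h1, h2]
    calc ∑ x : Fin n, |μ 0 x - 1/(n:ℝ)|
        ≤ ∑ x : Fin n, ((if x = j0 then (1:ℝ) else 0) + 1/(n:ℝ)) :=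
          Finset.sum_le_sum (fun x _ => hb x)
      _ = 1 + n * (1/(n:ℝ)) := by
          rw [Finset.sum_add_distrib, Finset.sum_const, Finset.sum_ite_eq' Finset.univ j0 (fun _ => (1:ℝ))]
          simp
      _ = 2 := by rw [mul_one_div, div_self hn']; norm_num
  have heq : ∑ x : Fin n, |μ t x - 1/(n:ℝ)| = (1 - 1/(n:ℝ))^t * ∑ x : Fin n, |μ 0 x - 1/(n:ℝ)| := by
    rw [Finset.mul_sum]
    refine Finset.sum_congr rfl (fun x _ => ?_)
    rw [hcontr t x, abs_mul, abs_of_nonneg (pow_nonneg hpos t)]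
  rw [heq]
  have := mul_le_mul_of_nonneg_left hsum0 (pow_nonneg hpos t)
  nlinarith [pow_nonneg hpos t]
end

section
/- Combining the previous bounds: if s ← (ZMod 2)^n is uniform and G ← G_{n,m,d} is uniform and independent, then the total variation distance between the distribution of f_{G,P}(s) (marginalized over both s and G) and Bern(η)^m is at most 2δ + m·d·√(log(1/δ)/(2n)) for every δ ∈ (0,1), where η = P_{x}[P(x)=1] for uniform x. -/
open Finset

private def bb (p : ℝ) (c : ZMod 2) : ℝ := if c = 1 then p else 1 - p

private lemma zmod2_cases (a : ZMod 2) : a = 0 ∨ a = 1 := by revert a; decide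

private lemma sum_zmod2 (f : ZMod 2 → ℝ) : ∑ c : ZMod 2, f c = f 0 + f 1 := by
  rw [show (Finset.univ : Finset (ZMod 2)) = {0, 1} by decide]
  rw [Finset.sum_insert (by decide), Finset.sum_singleton]

private lemma bb_nonneg {p : ℝ} (h0 : 0 ≤ p) (h1 : p ≤ 1) (c : ZMod 2) : 0 ≤ bb p c := by
  unfold bb; split <;> linarith

private lemma sum_bb (p : ℝ) : ∑ c : ZMod 2, bb p c = 1 := by
  rw [sum_zmod2]; unfold bb; norm_num

private lemma sum_abs_bb (a b : ℝ) : ∑ c : ZMod 2, |bb a c - bb b c| = 2 * |a - b| := by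
  rw [sum_zmod2]; unfold bb; norm_num
  rw [abs_sub_comm b a]; ring

private lemma sum_prod_bb (p : ℝ) (M : ℕ) :
    ∑ y : Fin M → ZMod 2, ∏ i, bb p (y i) = 1 := by
  rw [← Fintype.sum_pow, sum_bb, one_pow]

private lemma tv_prod (M : ℕ) {a b : ℝ} (ha0 : 0 ≤ a) (ha1 : a ≤ 1) (hb0 : 0 ≤ b)
    (hb1 : b ≤ 1) :
    ∑ y : Fin M → ZMod 2, |(∏ i, bb a (y i)) - ∏ i, bb b (y i)| ≤ 2 * M * |a - b| := by
  induction M with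
  | zero => simp
  | succ M ih =>
    have hdec : ∀ (f : (Fin (M+1) → ZMod 2) → ℝ), ∑ y, f y
        = ∑ c : ZMod 2, ∑ z : Fin M → ZMod 2, f (Fin.cons c z) := by
      intro f
      rw [← (Fin.consEquiv (fun _ : Fin (M+1) => ZMod 2)).sum_comp (g := f)]
      rw [Fintype.sum_prod_type]
      rfl
    rw [hdec]
    have key : ∀ (c : ZMod 2) (z : Fin M → ZMod 2),
        |(∏ i, bb a ((Fin.cons c z : Fin (M+1) → ZMod 2) i))
          - ∏ i, bb b ((Fin.cons c z : Fin (M+1) → ZMod 2) i)|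
        ≤ bb a c * |(∏ i, bb a (z i)) - ∏ i, bb b (z i)|
          + |bb a c - bb b c| * ∏ i, bb b (z i) := by
      intro c z
      rw [Fin.prod_univ_succ, Fin.prod_univ_succ]
      simp only [Fin.cons_zero, Fin.cons_succ]
      have hB : (0:ℝ) ≤ ∏ i, bb b (z i) := prod_nonneg fun i _ => bb_nonneg hb0 hb1 _
      have : bb a c * ∏ i, bb a (z i) - bb b c * ∏ i, bb b (z i)
          = bb a c * ((∏ i, bb a (z i)) - ∏ i, bb b (z i))
            + (bb a c - bb b c) * ∏ i, bb b (z i) := by ring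
      rw [this]
      calc _ ≤ |bb a c * ((∏ i, bb a (z i)) - ∏ i, bb b (z i))|
            + |(bb a c - bb b c) * ∏ i, bb b (z i)| := abs_add_le _ _
        _ = _ := by
            rw [abs_mul, abs_mul, abs_of_nonneg (bb_nonneg ha0 ha1 c), abs_of_nonneg hB]
    calc ∑ c : ZMod 2, ∑ z : Fin M → ZMod 2, |(∏ i, bb a ((Fin.cons c z : Fin (M+1) → ZMod 2) i))
          - ∏ i, bb b ((Fin.cons c z : Fin (M+1) → ZMod 2) i)|
        ≤ ∑ c : ZMod 2, ∑ z : Fin M → ZMod 2,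
            (bb a c * |(∏ i, bb a (z i)) - ∏ i, bb b (z i)|
              + |bb a c - bb b c| * ∏ i, bb b (z i)) :=
          Finset.sum_le_sum fun c _ => Finset.sum_le_sum fun z _ => key c z
      _ = (∑ c : ZMod 2, bb a c) * (∑ z : Fin M → ZMod 2, |(∏ i, bb a (z i)) - ∏ i, bb b (z i)|)
            + (∑ c : ZMod 2, |bb a c - bb b c|) * ∑ z : Fin M → ZMod 2, ∏ i, bb b (z i) := by
          simp only [Finset.sum_add_distrib, ← Finset.mul_sum, ← Finset.sum_mul]
      _ ≤ 2 * ((M:ℝ)+1) * |a - b| := by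
          rw [sum_bb, sum_abs_bb, sum_prod_bb, one_mul, mul_one]
          nlinarith [ih, abs_nonneg (a-b)]
      _ = 2 * ((M+1 : ℕ):ℝ) * |a - b| := by push_cast; ring

private lemma base_bound {t : ℝ} :
    (1 + Real.exp (4*t)) * Real.exp (-(4*t*(1/2+t))) ≤ 2 * Real.exp (-(2*t^2)) := by
  have e1 : (1 + Real.exp (4*t)) * Real.exp (-(4*t*(1/2+t)))
      = (Real.exp (-(2*t)) + Real.exp (2*t)) * Real.exp (-(4*t^2)) := by
    rw [add_mul, one_mul, ← Real.exp_add, add_mul, ← Real.exp_add, ← Real.exp_add]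
    ring_nf
  have e2 : Real.exp (-(2*t)) + Real.exp (2*t) = 2 * Real.cosh (2*t) := by
    rw [Real.cosh_eq]; ring
  have e3 : Real.cosh (2*t) ≤ Real.exp (2*t^2) := by
    have := Real.cosh_le_exp_half_sq (2*t)
    convert this using 2
    ring
  rw [e1, e2]
  calc 2 * Real.cosh (2*t) * Real.exp (-(4*t^2))
      ≤ 2 * Real.exp (2*t^2) * Real.exp (-(4*t^2)) := by
        have h := Real.exp_pos (-(4*t^2))
        nlinarith
    _ = 2 * Real.exp (-(2*t^2)) := by
        rw [mul_assoc, ← Real.exp_add]; ring_nf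

private lemma hoeff_one_sided (n : ℕ) {t : ℝ} (ht : 0 ≤ t) (c : ZMod 2) :
    ∑ s : Fin n → ZMod 2,
        (if (n:ℝ)*(1/2+t) ≤ ∑ j, (if s j = c then (1:ℝ) else 0) then (1:ℝ) else 0)
      ≤ 2^n * Real.exp (-(2*n*t^2)) := by
  have step1 : ∀ s : Fin n → ZMod 2,
      (if (n:ℝ)*(1/2+t) ≤ ∑ j, (if s j = c then (1:ℝ) else 0) then (1:ℝ) else 0)
      ≤ Real.exp (4*t*((∑ j, (if s j = c then (1:ℝ) else 0)) - n*(1/2+t))) := by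
    intro s
    split
    · rename_i h
      have h0 : (0:ℝ) ≤ (∑ j, (if s j = c then (1:ℝ) else 0)) - n*(1/2+t) := by linarith
      have h1 : (0:ℝ) ≤ 4*t*((∑ j, (if s j = c then (1:ℝ) else 0)) - n*(1/2+t)) :=
        mul_nonneg (by linarith) h0
      have := Real.add_one_le_exp (4*t*((∑ j, (if s j = c then (1:ℝ) else 0)) - n*(1/2+t)))
      linarith
    · positivity
  have step2 : ∀ s : Fin n → ZMod 2,
      Real.exp (4*t*((∑ j, (if s j = c then (1:ℝ) else 0)) - n*(1/2+t)))
      = (∏ j, Real.exp (4*t*(if s j = c then (1:ℝ) else 0)))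
          * Real.exp (-(4*t*(n*(1/2+t)))) := by
    intro s
    rw [← Real.exp_sum, ← Real.exp_add]
    congr 1
    rw [mul_sub, Finset.mul_sum]
    ring
  have step3 : ∀ b : ZMod 2, Real.exp (4*t*(if b = c then (1:ℝ) else 0))
      = (if b = c then Real.exp (4*t) else 1) := by
    intro b; split <;> simp
  calc ∑ s : Fin n → ZMod 2,
        (if (n:ℝ)*(1/2+t) ≤ ∑ j, (if s j = c then (1:ℝ) else 0) then (1:ℝ) else 0)
      ≤ ∑ s : Fin n → ZMod 2,
          Real.exp (4*t*((∑ j, (if s j = c then (1:ℝ) else 0)) - n*(1/2+t))) :=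
        Finset.sum_le_sum fun s _ => step1 s
    _ = (∑ s : Fin n → ZMod 2, ∏ j, (if s j = c then Real.exp (4*t) else 1))
          * Real.exp (-(4*t*(n*(1/2+t)))) := by
        rw [Finset.sum_mul]
        exact Finset.sum_congr rfl fun s _ => by
          rw [step2 s]
          congr 1
          exact Finset.prod_congr rfl fun j _ => step3 (s j)
    _ = (∑ b : ZMod 2, (if b = c then Real.exp (4*t) else 1))^n
          * Real.exp (-(4*t*(n*(1/2+t)))) := by
        rw [Fintype.sum_pow (fun b : ZMod 2 => if b = c then Real.exp (4*t) else 1) n]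
    _ = ((1 + Real.exp (4*t)) * Real.exp (-(4*t*(1/2+t))))^n := by
        have hsum : ∑ b : ZMod 2, (if b = c then Real.exp (4*t) else 1)
            = 1 + Real.exp (4*t) := by
          rcases zmod2_cases c with rfl | rfl <;>
            rw [sum_zmod2] <;>
            simp [show (1:ZMod 2) ≠ 0 by decide, show (0:ZMod 2) ≠ 1 by decide] <;> ring
        rw [hsum, mul_pow, ← Real.exp_nat_mul]
        congr 2
        ring
    _ ≤ (2 * Real.exp (-(2*t^2)))^n := by
        apply pow_le_pow_left₀ (by positivity) base_bound
    _ = 2^n * Real.exp (-(2*n*t^2)) := by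
        rw [mul_pow, ← Real.exp_nat_mul]
        congr 2
        ring
private lemma hoeff_two_sided (n : ℕ) (hn : 0 < n) {t : ℝ} (ht : 0 ≤ t) :
    ∑ s : Fin n → ZMod 2,
        (if t < |(∑ j, (if s j = 1 then (1:ℝ) else 0))/n - 1/2| then (1:ℝ) else 0)
      ≤ 2^n * (2 * Real.exp (-(2*n*t^2))) := by
  have hnR : (0:ℝ) < n := by exact_mod_cast hn
  have key : ∀ s : Fin n → ZMod 2,
      (if t < |(∑ j, (if s j = 1 then (1:ℝ) else 0))/n - 1/2| then (1:ℝ) else 0)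
      ≤ (if (n:ℝ)*(1/2+t) ≤ ∑ j, (if s j = (1:ZMod 2) then (1:ℝ) else 0) then (1:ℝ) else 0)
        + (if (n:ℝ)*(1/2+t) ≤ ∑ j, (if s j = (0:ZMod 2) then (1:ℝ) else 0) then (1:ℝ) else 0) := by
    intro s
    set W1 := ∑ j, (if s j = (1:ZMod 2) then (1:ℝ) else 0) with hW1
    set W0 := ∑ j, (if s j = (0:ZMod 2) then (1:ℝ) else 0) with hW0
    have hw : W0 + W1 = n := by
      rw [hW0, hW1, ← Finset.sum_add_distrib]
      have hone : ∀ j, ((if s j = (0:ZMod 2) then (1:ℝ) else 0)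
          + (if s j = (1:ZMod 2) then (1:ℝ) else 0)) = 1 := by
        intro j
        rcases zmod2_cases (s j) with h | h <;>
          simp [h, show (0:ZMod 2) ≠ 1 by decide, show (1:ZMod 2) ≠ 0 by decide]
      rw [Finset.sum_congr rfl fun j _ => hone j]
      simp
    by_cases hc : t < |W1/n - 1/2|
    · rw [if_pos hc]
      have hor : (n:ℝ)*(1/2+t) ≤ W1 ∨ (n:ℝ)*(1/2+t) ≤ W0 := by
        have hq : W1/n*n = W1 := div_mul_cancel₀ _ (ne_of_gt hnR)
        rcases lt_abs.1 hc with h | h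
        · left; nlinarith [hq]
        · right; nlinarith [hq, hw]
      rcases hor with h | h
      · rw [if_pos h]
        have : (0:ℝ) ≤ (if (n:ℝ)*(1/2+t) ≤ W0 then (1:ℝ) else 0) := by positivity
        linarith
      · rw [if_pos h]
        have : (0:ℝ) ≤ (if (n:ℝ)*(1/2+t) ≤ W1 then (1:ℝ) else 0) := by positivity
        linarith
    · rw [if_neg hc]; positivity
  calc _ ≤ ∑ s : Fin n → ZMod 2,
        ((if (n:ℝ)*(1/2+t) ≤ ∑ j, (if s j = (1:ZMod 2) then (1:ℝ) else 0) then (1:ℝ) else 0)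
          + (if (n:ℝ)*(1/2+t) ≤ ∑ j, (if s j = (0:ZMod 2) then (1:ℝ) else 0) then (1:ℝ) else 0)) :=
        Finset.sum_le_sum fun s _ => key s
    _ ≤ 2^n * Real.exp (-(2*n*t^2)) + 2^n * Real.exp (-(2*n*t^2)) := by
        rw [Finset.sum_add_distrib]
        exact add_le_add (hoeff_one_sided n ht 1) (hoeff_one_sided n ht 0)
    _ = 2^n * (2 * Real.exp (-(2*n*t^2))) := by ring
private noncomputable def pfun (n : ℕ) (s : Fin n → ZMod 2) : ℝ :=
  (∑ j, (if s j = 1 then (1:ℝ) else 0)) / n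

private noncomputable def qfun {n d : ℕ} (P : (Fin d → ZMod 2) → ZMod 2)
    (s : Fin n → ZMod 2) : ℝ :=
  ∑ x : Fin d → ZMod 2, (if P x = 1 then ∏ k, bb (pfun n s) (x k) else 0)

private lemma pfun_mem {n : ℕ} (hn : 0 < n) (s : Fin n → ZMod 2) :
    0 ≤ pfun n s ∧ pfun n s ≤ 1 := by
  have hnR : (0:ℝ) < n := by exact_mod_cast hn
  constructor
  · apply div_nonneg _ (le_of_lt hnR)
    apply Finset.sum_nonneg; intro j _; positivity
  · rw [pfun, div_le_one hnR]
    calc ∑ j, (if s j = 1 then (1:ℝ) else 0) ≤ ∑ _j : Fin n, (1:ℝ) :=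
        Finset.sum_le_sum fun j _ => by split <;> norm_num
      _ = n := by simp

private lemma qfun_mem {n d : ℕ} (P : (Fin d → ZMod 2) → ZMod 2) (hn : 0 < n)
    (s : Fin n → ZMod 2) : 0 ≤ qfun P s ∧ qfun P s ≤ 1 := by
  obtain ⟨hp0, hp1⟩ := pfun_mem hn s
  have hterm : ∀ x : Fin d → ZMod 2, (0:ℝ) ≤ ∏ k, bb (pfun n s) (x k) :=
    fun x => Finset.prod_nonneg fun k _ => bb_nonneg hp0 hp1 _
  constructor
  · apply Finset.sum_nonneg; intro x _
    split
    · exact hterm x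
    · exact le_rfl
  · calc qfun P s
        ≤ ∑ x : Fin d → ZMod 2, ∏ k, bb (pfun n s) (x k) := by
          rw [qfun]
          apply Finset.sum_le_sum; intro x _
          split
          · exact le_rfl
          · exact hterm x
      _ = 1 := sum_prod_bb _ d

private lemma count_coord {n : ℕ} (hn : 0 < n) (s : Fin n → ZMod 2) (v : ZMod 2) :
    ∑ j : Fin n, (if s j = v then (1:ℝ) else 0) = n * bb (pfun n s) v := by
  have hnR : (0:ℝ) < n := by exact_mod_cast hn
  have h1 : ∑ j : Fin n, (if s j = (1:ZMod 2) then (1:ℝ) else 0) = n * pfun n s := by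
    rw [pfun, mul_div_cancel₀ _ (ne_of_gt hnR)]
  rcases zmod2_cases v with rfl | rfl
  · have hsum : (∑ j : Fin n, (if s j = (0:ZMod 2) then (1:ℝ) else 0))
        + ∑ j : Fin n, (if s j = (1:ZMod 2) then (1:ℝ) else 0) = n := by
      rw [← Finset.sum_add_distrib]
      have hone : ∀ j, ((if s j = (0:ZMod 2) then (1:ℝ) else 0)
          + (if s j = (1:ZMod 2) then (1:ℝ) else 0)) = 1 := by
        intro j
        rcases zmod2_cases (s j) with h | h <;>
          simp [h, show (0:ZMod 2) ≠ 1 by decide, show (1:ZMod 2) ≠ 0 by decide]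
      rw [Finset.sum_congr rfl fun j _ => hone j]
      simp
    have : bb (pfun n s) 0 = 1 - pfun n s := by
      rw [bb, if_neg (show (0:ZMod 2) ≠ 1 by decide)]
    rw [this]
    linarith [h1, hsum]
  · rw [h1, bb, if_pos rfl]

private lemma count_pattern {n d : ℕ} (hn : 0 < n) (s : Fin n → ZMod 2)
    (x : Fin d → ZMod 2) :
    ∑ g : Fin d → Fin n, (if (fun k => s (g k)) = x then (1:ℝ) else 0)
      = ∏ k : Fin d, ((n:ℝ) * bb (pfun n s) (x k)) := by
  have hg : ∀ g : Fin d → Fin n, (if (fun k => s (g k)) = x then (1:ℝ) else 0)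
      = ∏ k, (if s (g k) = x k then (1:ℝ) else 0) := by
    intro g
    rw [Fintype.prod_boole]
    simp only [funext_iff]
    congr 1
  rw [Finset.sum_congr rfl fun g _ => hg g]
  rw [← Fintype.prod_sum (fun (k : Fin d) (j : Fin n) => (if s j = x k then (1:ℝ) else 0))]
  exact Finset.prod_congr rfl fun k _ => count_coord hn s (x k)
private lemma qc_split {n d : ℕ} (P : (Fin d → ZMod 2) → ZMod 2) (s : Fin n → ZMod 2) :
    (∑ x : Fin d → ZMod 2, (if P x = 0 then ∏ k, bb (pfun n s) (x k) else 0))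
      = 1 - qfun P s := by
  have htot : (∑ x : Fin d → ZMod 2, (if P x = 0 then ∏ k, bb (pfun n s) (x k) else 0))
      + ∑ x : Fin d → ZMod 2, (if P x = 1 then ∏ k, bb (pfun n s) (x k) else 0)
      = ∑ x : Fin d → ZMod 2, ∏ k, bb (pfun n s) (x k) := by
    rw [← Finset.sum_add_distrib]
    apply Finset.sum_congr rfl
    intro x _
    rcases zmod2_cases (P x) with h | h <;>
      simp [h, show (0:ZMod 2) ≠ 1 by decide, show (1:ZMod 2) ≠ 0 by decide]
  rw [sum_prod_bb] at htot
  rw [qfun]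
  linarith

private lemma count_g {n d : ℕ} (P : (Fin d → ZMod 2) → ZMod 2) (hn : 0 < n)
    (s : Fin n → ZMod 2) (c : ZMod 2) :
    ∑ g : Fin d → Fin n, (if P (fun k => s (g k)) = c then (1:ℝ) else 0)
      = (n:ℝ)^d * bb (qfun P s) c := by
  have expand : ∀ g : Fin d → Fin n, (if P (fun k => s (g k)) = c then (1:ℝ) else 0)
      = ∑ x : Fin d → ZMod 2,
          (if (fun k => s (g k)) = x then (if P x = c then (1:ℝ) else 0) else 0) := by
    intro g
    rw [Finset.sum_ite_eq]
    simp
  rw [Finset.sum_congr rfl fun g _ => expand g, Finset.sum_comm]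
  have inner : ∀ x : Fin d → ZMod 2,
      ∑ g : Fin d → Fin n, (if (fun k => s (g k)) = x then (if P x = c then (1:ℝ) else 0) else 0)
      = (if P x = c then (1:ℝ) else 0) * ((n:ℝ)^d * ∏ k, bb (pfun n s) (x k)) := by
    intro x
    have h1 : ∀ g : Fin d → Fin n,
        (if (fun k => s (g k)) = x then (if P x = c then (1:ℝ) else 0) else 0)
        = (if P x = c then (1:ℝ) else 0) * (if (fun k => s (g k)) = x then (1:ℝ) else 0) := by
      intro g; split <;> split <;> norm_num
    rw [Finset.sum_congr rfl fun g _ => h1 g, ← Finset.mul_sum, count_pattern hn s x]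
    rw [Finset.prod_mul_distrib, Finset.prod_const]
    simp
  rw [Finset.sum_congr rfl fun x _ => inner x]
  have h2 : ∀ x : Fin d → ZMod 2,
      (if P x = c then (1:ℝ) else 0) * ((n:ℝ)^d * ∏ k, bb (pfun n s) (x k))
      = (n:ℝ)^d * (if P x = c then ∏ k, bb (pfun n s) (x k) else 0) := by
    intro x; split <;> ring
  rw [Finset.sum_congr rfl fun x _ => h2 x, ← Finset.mul_sum]
  congr 1
  rcases zmod2_cases c with rfl | rfl
  · rw [qc_split P s, bb, if_neg (show (0:ZMod 2) ≠ 1 by decide)]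
  · rw [bb, if_pos rfl, qfun]

private lemma main_count {n m d : ℕ} (P : (Fin d → ZMod 2) → ZMod 2) (hn : 0 < n)
    (y : Fin m → ZMod 2) :
    ((univ.filter (fun sG : (Fin n → ZMod 2) × (Fin m → Fin d → Fin n) =>
        (fun i => P (fun k => sG.1 (sG.2 i k))) = y)).card : ℝ)
      = ((n:ℝ)^d)^m * ∑ s : Fin n → ZMod 2, ∏ i : Fin m, bb (qfun P s) (y i) := by
  rw [Finset.card_filter]
  push_cast
  rw [Fintype.sum_prod_type]
  have per_s : ∀ s : Fin n → ZMod 2,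
      ∑ G : Fin m → Fin d → Fin n,
          (if (fun i => P (fun k => s (G i k))) = y then (1:ℝ) else 0)
      = ((n:ℝ)^d)^m * ∏ i : Fin m, bb (qfun P s) (y i) := by
    intro s
    have hg : ∀ G : Fin m → Fin d → Fin n,
        (if (fun i => P (fun k => s (G i k))) = y then (1:ℝ) else 0)
        = ∏ i : Fin m, (if P (fun k => s (G i k)) = y i then (1:ℝ) else 0) := by
      intro G
      rw [Fintype.prod_boole]
      simp only [funext_iff]
      congr 1
    rw [Finset.sum_congr rfl fun G _ => hg G]
    rw [← Fintype.prod_sum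
      (fun (i : Fin m) (g : Fin d → Fin n) => (if P (fun k => s (g k)) = y i then (1:ℝ) else 0))]
    rw [Finset.prod_congr rfl fun i _ => count_g P hn s (y i)]
    rw [Finset.prod_mul_distrib, Finset.prod_const]
    simp
  rw [Finset.sum_congr rfl fun s _ => per_s s, ← Finset.mul_sum]
private lemma eta_eq {d : ℕ} (P : (Fin d → ZMod 2) → ZMod 2) :
    ((univ.filter (fun x : Fin d → ZMod 2 => P x = 1)).card : ℝ) / 2^d
      = ∑ x : Fin d → ZMod 2, (if P x = 1 then ∏ k, bb (1/2 : ℝ) (x k) else 0) := by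
  have hprod : ∀ x : Fin d → ZMod 2, ∏ k, bb (1/2 : ℝ) (x k) = (1/2)^d := by
    intro x
    rw [Finset.prod_congr rfl fun k _ => (by rw [bb]; split <;> norm_num :
      bb (1/2:ℝ) (x k) = 1/2), Finset.prod_const]
    simp
  rw [Finset.sum_congr rfl fun x _ => by rw [hprod x]]
  rw [← Finset.sum_filter, Finset.sum_const, nsmul_eq_mul]
  rw [div_pow, one_pow]
  ring

private lemma qdiff {n d : ℕ} (P : (Fin d → ZMod 2) → ZMod 2) (hn : 0 < n)
    (s : Fin n → ZMod 2) :
    |qfun P s - ∑ x : Fin d → ZMod 2, (if P x = 1 then ∏ k, bb (1/2:ℝ) (x k) else 0)|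
      ≤ d * |pfun n s - 1/2| := by
  obtain ⟨hp0, hp1⟩ := pfun_mem hn s
  set D : (Fin d → ZMod 2) → ℝ :=
    fun x => (∏ k, bb (pfun n s) (x k)) - ∏ k, bb (1/2:ℝ) (x k) with hD
  have hA : qfun P s - (∑ x : Fin d → ZMod 2, (if P x = 1 then ∏ k, bb (1/2:ℝ) (x k) else 0))
      = ∑ x : Fin d → ZMod 2, (if P x = 1 then D x else 0) := by
    rw [qfun, ← Finset.sum_sub_distrib]
    apply Finset.sum_congr rfl
    intro x _
    split <;> simp [hD]
  have htot : ∑ x : Fin d → ZMod 2, D x = 0 := by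
    rw [hD, Finset.sum_sub_distrib, sum_prod_bb, sum_prod_bb, sub_self]
  have hA' : ∑ x : Fin d → ZMod 2, (if P x = 1 then 0 else D x)
      = -∑ x : Fin d → ZMod 2, (if P x = 1 then D x else 0) := by
    have hsum : (∑ x : Fin d → ZMod 2, (if P x = 1 then D x else 0))
        + ∑ x : Fin d → ZMod 2, (if P x = 1 then 0 else D x)
        = ∑ x : Fin d → ZMod 2, D x := by
      rw [← Finset.sum_add_distrib]
      apply Finset.sum_congr rfl
      intro x _
      split <;> ring
    rw [htot] at hsum
    linarith
  have h1 : |∑ x : Fin d → ZMod 2, (if P x = 1 then D x else 0)|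
      ≤ ∑ x : Fin d → ZMod 2, |if P x = 1 then D x else 0| :=
    Finset.abs_sum_le_sum_abs _ _
  have h2 : |∑ x : Fin d → ZMod 2, (if P x = 1 then D x else 0)|
      ≤ ∑ x : Fin d → ZMod 2, |if P x = 1 then 0 else D x| := by
    rw [← abs_neg, ← hA']
    exact Finset.abs_sum_le_sum_abs _ _
  have h3 : (∑ x : Fin d → ZMod 2, |if P x = 1 then D x else 0|)
      + ∑ x : Fin d → ZMod 2, |if P x = 1 then 0 else D x|
      = ∑ x : Fin d → ZMod 2, |D x| := by
    rw [← Finset.sum_add_distrib]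
    apply Finset.sum_congr rfl
    intro x _
    split <;> simp
  have h4 : ∑ x : Fin d → ZMod 2, |D x| ≤ 2 * d * |pfun n s - 1/2| :=
    tv_prod d hp0 hp1 (by norm_num) (by norm_num)
  rw [hA]
  linarith

/-- For uniform independent `s ← (ZMod 2)^n` and `G ← G_{n,m,d}`, the total
variation distance between the distribution of `f_{G,P}(s)` and `Bern(η)^m` is at most
`2δ + m·d·√(log(1/δ)/(2n))` for every `δ ∈ (0,1)`, where `η = P_x[P(x)=1]` for uniform `x`. -/
theorem output_close_to_bernoulli {n m d : ℕ} (hn : 0 < n)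
    (P : (Fin d → ZMod 2) → ZMod 2) (η : ℝ)
    (hη : η = ((univ.filter (fun x : Fin d → ZMod 2 => P x = 1)).card : ℝ) / 2^d) :
    ∀ δ ∈ Set.Ioo (0 : ℝ) 1,
      (1/2) * ∑ y : Fin m → ZMod 2,
          |((univ.filter (fun sG : (Fin n → ZMod 2) × (Fin m → Fin d → Fin n) =>
              (fun i => P (fun k => sG.1 (sG.2 i k))) = y)).card : ℝ)
              / (Fintype.card ((Fin n → ZMod 2) × (Fin m → Fin d → Fin n)) : ℝ)
            - ∏ i : Fin m, (if y i = 1 then η else 1 - η)|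
        ≤ 2 * δ + (m : ℝ) * d * Real.sqrt (Real.log (1/δ) / (2 * n)) := by
  intro δ hδ
  obtain ⟨hδ0, hδ1⟩ := hδ
  have hnR : (0:ℝ) < n := by exact_mod_cast hn
  set t : ℝ := Real.sqrt (Real.log (1/δ) / (2 * n)) with hts
  have ht0 : 0 ≤ t := Real.sqrt_nonneg _
  have hlog0 : 0 ≤ Real.log (1/δ) := Real.log_nonneg (by rw [le_div_iff₀ hδ0]; linarith)
  have ht2 : t^2 = Real.log (1/δ) / (2 * n) := Real.sq_sqrt (by positivity)
  have hexp : Real.exp (-(2*n*t^2)) = δ := by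
    rw [ht2]
    have : -(2*(n:ℝ) * (Real.log (1/δ) / (2 * n))) = -Real.log (1/δ) := by
      field_simp
    rw [this, one_div, Real.log_inv, neg_neg, Real.exp_log hδ0]
  -- eta facts
  have hη_eq : η = ∑ x : Fin d → ZMod 2, (if P x = 1 then ∏ k, bb (1/2:ℝ) (x k) else 0) := by
    rw [hη, eta_eq]
  have hη0 : 0 ≤ η := by rw [hη]; positivity
  have hη1 : η ≤ 1 := by
    rw [hη]
    have hcard : ((univ.filter (fun x : Fin d → ZMod 2 => P x = 1)).card : ℝ) ≤ 2^d := by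
      have h := Finset.card_filter_le (univ : Finset (Fin d → ZMod 2))
        (fun x => P x = 1)
      have hc : (Fintype.card (Fin d → ZMod 2)) = 2^d := by simp
      rw [Finset.card_univ, hc] at h
      exact_mod_cast h
    rw [div_le_one (by positivity)]
    exact hcard
  -- denominator
  have hden : ((Fintype.card ((Fin n → ZMod 2) × (Fin m → Fin d → Fin n))) : ℝ)
      = 2^n * ((n:ℝ)^d)^m := by
    rw [Fintype.card_prod]
    have h1 : Fintype.card (Fin n → ZMod 2) = 2^n := by simp
    have h2 : Fintype.card (Fin m → Fin d → Fin n) = (n^d)^m := by simp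
    rw [h1, h2]
    push_cast
    ring
  have hndpos : (0:ℝ) < ((n:ℝ)^d)^m := by positivity
  -- rewrite each |term|
  have hterm : ∀ y : Fin m → ZMod 2,
      ((univ.filter (fun sG : (Fin n → ZMod 2) × (Fin m → Fin d → Fin n) =>
          (fun i => P (fun k => sG.1 (sG.2 i k))) = y)).card : ℝ)
          / (Fintype.card ((Fin n → ZMod 2) × (Fin m → Fin d → Fin n)) : ℝ)
        - ∏ i : Fin m, (if y i = 1 then η else 1 - η)
      = (1/2^n) * ∑ s : Fin n → ZMod 2,
          ((∏ i : Fin m, bb (qfun P s) (y i)) - ∏ i : Fin m, bb η (y i)) := by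
    intro y
    have hbbeta : (∏ i : Fin m, (if y i = 1 then η else 1 - η))
        = ∏ i : Fin m, bb η (y i) := rfl
    rw [hbbeta, main_count P hn y, hden]
    rw [Finset.sum_sub_distrib, Finset.sum_const, Finset.card_univ]
    have hc2 : (Fintype.card (Fin n → ZMod 2)) = 2^n := by simp
    rw [hc2]
    field_simp
    ring
  -- per-s TV bound
  have per_s : ∀ s : Fin n → ZMod 2,
      (1/2) * ∑ y : Fin m → ZMod 2,
          |(∏ i : Fin m, bb (qfun P s) (y i)) - ∏ i : Fin m, bb η (y i)|
        ≤ (if t < |pfun n s - 1/2| then (1:ℝ) else (m:ℝ)*d*t) := by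
    intro s
    obtain ⟨hq0, hq1⟩ := qfun_mem P hn s
    split
    · -- bound by 1
      have hb : ∀ y : Fin m → ZMod 2,
          |(∏ i : Fin m, bb (qfun P s) (y i)) - ∏ i : Fin m, bb η (y i)|
          ≤ (∏ i : Fin m, bb (qfun P s) (y i)) + ∏ i : Fin m, bb η (y i) := by
        intro y
        have h1 : (0:ℝ) ≤ ∏ i : Fin m, bb (qfun P s) (y i) :=
          Finset.prod_nonneg fun i _ => bb_nonneg hq0 hq1 _
        have h2 : (0:ℝ) ≤ ∏ i : Fin m, bb η (y i) :=
          Finset.prod_nonneg fun i _ => bb_nonneg hη0 hη1 _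
        rw [abs_sub_le_iff]
        constructor <;> linarith
      have hsum : ∑ y : Fin m → ZMod 2,
          |(∏ i : Fin m, bb (qfun P s) (y i)) - ∏ i : Fin m, bb η (y i)| ≤ 2 := by
        calc ∑ y : Fin m → ZMod 2,
              |(∏ i : Fin m, bb (qfun P s) (y i)) - ∏ i : Fin m, bb η (y i)|
            ≤ ∑ y : Fin m → ZMod 2,
              ((∏ i : Fin m, bb (qfun P s) (y i)) + ∏ i : Fin m, bb η (y i)) :=
              Finset.sum_le_sum fun y _ => hb y
          _ = 2 := by
              rw [Finset.sum_add_distrib, sum_prod_bb, sum_prod_bb]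
              norm_num
      linarith
    · -- bound by m*d*t
      rename_i hnt
      push_neg at hnt
      have htv : ∑ y : Fin m → ZMod 2,
          |(∏ i : Fin m, bb (qfun P s) (y i)) - ∏ i : Fin m, bb η (y i)|
          ≤ 2 * m * |qfun P s - η| := tv_prod m hq0 hq1 hη0 hη1
      have hqd : |qfun P s - η| ≤ d * |pfun n s - 1/2| := by
        rw [hη_eq]
        exact qdiff P hn s
      have hppos : |pfun n s - 1/2| ≤ t := hnt
      have hmd : (0:ℝ) ≤ (m:ℝ) * d := by positivity
      calc (1/2) * ∑ y : Fin m → ZMod 2,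
            |(∏ i : Fin m, bb (qfun P s) (y i)) - ∏ i : Fin m, bb η (y i)|
          ≤ (1/2) * (2 * m * |qfun P s - η|) := by linarith
        _ = (m:ℝ) * |qfun P s - η| := by ring
        _ ≤ (m:ℝ) * (d * |pfun n s - 1/2|) := by
            apply mul_le_mul_of_nonneg_left hqd (by positivity)
        _ ≤ (m:ℝ)*d*t := by
            rw [← mul_assoc]
            exact mul_le_mul_of_nonneg_left hppos hmd
  -- indicator + constant bound
  have indic : ∀ s : Fin n → ZMod 2,
      (if t < |pfun n s - 1/2| then (1:ℝ) else (m:ℝ)*d*t)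
      ≤ (if t < |pfun n s - 1/2| then (1:ℝ) else 0) + (m:ℝ)*d*t := by
    intro s
    have : (0:ℝ) ≤ (m:ℝ)*d*t := by positivity
    split <;> linarith
  -- Hoeffding
  have hoeff : ∑ s : Fin n → ZMod 2, (if t < |pfun n s - 1/2| then (1:ℝ) else 0)
      ≤ 2^n * (2 * δ) := by
    rw [← hexp]
    simp only [pfun]
    exact hoeff_two_sided n hn ht0
  -- put it together
  calc (1/2) * ∑ y : Fin m → ZMod 2,
        |((univ.filter (fun sG : (Fin n → ZMod 2) × (Fin m → Fin d → Fin n) =>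
            (fun i => P (fun k => sG.1 (sG.2 i k))) = y)).card : ℝ)
            / (Fintype.card ((Fin n → ZMod 2) × (Fin m → Fin d → Fin n)) : ℝ)
          - ∏ i : Fin m, (if y i = 1 then η else 1 - η)|
      = (1/2) * ∑ y : Fin m → ZMod 2, |(1/2^n) * ∑ s : Fin n → ZMod 2,
          ((∏ i : Fin m, bb (qfun P s) (y i)) - ∏ i : Fin m, bb η (y i))| := by
        rw [Finset.sum_congr rfl fun y _ => by rw [hterm y]]
    _ ≤ (1/2^n) * ∑ s : Fin n → ZMod 2, ((1/2) * ∑ y : Fin m → ZMod 2,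
          |(∏ i : Fin m, bb (qfun P s) (y i)) - ∏ i : Fin m, bb η (y i)|) := by
        have h1 : ∀ y : Fin m → ZMod 2,
            |(1/2^n : ℝ) * ∑ s : Fin n → ZMod 2,
              ((∏ i : Fin m, bb (qfun P s) (y i)) - ∏ i : Fin m, bb η (y i))|
            ≤ (1/2^n) * ∑ s : Fin n → ZMod 2,
              |(∏ i : Fin m, bb (qfun P s) (y i)) - ∏ i : Fin m, bb η (y i)| := by
          intro y
          rw [abs_mul, abs_of_nonneg (by positivity : (0:ℝ) ≤ 1/2^n)]
          exact mul_le_mul_of_nonneg_left (Finset.abs_sum_le_sum_abs _ _) (by positivity)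
        calc (1/2) * ∑ y : Fin m → ZMod 2, |(1/2^n : ℝ) * ∑ s : Fin n → ZMod 2,
              ((∏ i : Fin m, bb (qfun P s) (y i)) - ∏ i : Fin m, bb η (y i))|
            ≤ (1/2) * ∑ y : Fin m → ZMod 2, ((1/2^n : ℝ) * ∑ s : Fin n → ZMod 2,
              |(∏ i : Fin m, bb (qfun P s) (y i)) - ∏ i : Fin m, bb η (y i)|) :=
              mul_le_mul_of_nonneg_left (Finset.sum_le_sum fun y _ => h1 y) (by norm_num)
          _ = (1/2^n) * ∑ s : Fin n → ZMod 2, ((1/2) * ∑ y : Fin m → ZMod 2,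
              |(∏ i : Fin m, bb (qfun P s) (y i)) - ∏ i : Fin m, bb η (y i)|) := by
              simp only [Finset.mul_sum]
              rw [Finset.sum_comm]
              apply Finset.sum_congr rfl; intro s _
              apply Finset.sum_congr rfl; intro y _
              ring
    _ ≤ (1/2^n) * ∑ s : Fin n → ZMod 2,
          (if t < |pfun n s - 1/2| then (1:ℝ) else (m:ℝ)*d*t) := by
        apply mul_le_mul_of_nonneg_left _ (by positivity)
        exact Finset.sum_le_sum fun s _ => per_s s
    _ ≤ (1/2^n) * (∑ s : Fin n → ZMod 2,
          ((if t < |pfun n s - 1/2| then (1:ℝ) else 0) + (m:ℝ)*d*t)) := by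
        apply mul_le_mul_of_nonneg_left _ (by positivity)
        exact Finset.sum_le_sum fun s _ => indic s
    _ ≤ 2 * δ + (m:ℝ)*d*t := by
        rw [Finset.sum_add_distrib, Finset.sum_const, Finset.card_univ]
        have hc2 : (Fintype.card (Fin n → ZMod 2)) = 2^n := by simp
        rw [hc2]
        have h2n : (0:ℝ) < 2^n := by positivity
        have := hoeff
        rw [mul_add]
        have e1 : (1/2^n : ℝ) * ((2^n : ℕ) • ((m:ℝ)*d*t)) = (m:ℝ)*d*t := by
          rw [nsmul_eq_mul]
          push_cast
          field_simp
        rw [e1]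
        have e2 : (1/2^n : ℝ) * (∑ s : Fin n → ZMod 2,
            (if t < |pfun n s - 1/2| then (1:ℝ) else 0)) ≤ 2 * δ := by
          rw [div_mul_eq_mul_div, one_mul, div_le_iff₀ h2n]
          calc ∑ s : Fin n → ZMod 2, (if t < |pfun n s - 1/2| then (1:ℝ) else 0)
              ≤ 2^n * (2*δ) := hoeff
            _ = 2 * δ * 2^n := by ring
        linarith
end

section
/- Fix a,b ∈ [n] with a ≠ b and a predicate P. For any secret s with s_a = s_b, the joint distribution of (T_{a,b}(G), f_{G,P}(s)) with G uniform on G_{n,m,d} equals the joint distribution of (G', f_{G',P}(s)) with G' uniform on G_{n,m,d}. -/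
open Finset

/-- Transition probability of `T_{a,b}` on hypergraphs `G_{n,m,d} = ([n]^d)^m`. -/
noncomputable def Tkernel {n m d : ℕ} (a b : Fin n) (G G' : Fin m → Fin d → Fin n) : ℝ :=
  ∏ i : Fin m, ∏ k : Fin d, Tstep a b (G i k) (G' i k)

lemma sum_Tstep {n : ℕ} (a b : Fin n) (hab : a ≠ b) (j' : Fin n) :
    ∑ j : Fin n, Tstep a b j j' = 1 := by
  have h1 : ∀ j : Fin n, Tstep a b j j'
      = (if j' = j ∧ j ≠ a ∧ j ≠ b then 1 else 0)
        + (if j = a ∨ j = b then ((if j' = a then (1:ℝ)/2 else 0) + (if j' = b then 1/2 else 0)) else 0) := by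
    intro j
    unfold Tstep
    by_cases hja : j = a
    · subst hja; simp [hab]
    · by_cases hjb : j = b
      · subst hjb; simp [hja, Ne.symm hab]
      · simp [hja, hjb]
  simp only [h1, Finset.sum_add_distrib]
  have h2 : (∑ j : Fin n, (if j = a ∨ j = b then ((if j' = a then (1:ℝ)/2 else 0) + (if j' = b then 1/2 else 0)) else 0))
      = ∑ j ∈ ({a, b} : Finset (Fin n)), ((if j' = a then (1:ℝ)/2 else 0) + (if j' = b then 1/2 else 0)) := by
    rw [← Finset.sum_filter]
    congr 1
    ext j
    simp
  rw [h2, Finset.sum_pair hab]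
  by_cases hmem : j' = a ∨ j' = b
  · have hz : (∑ j : Fin n, if j' = j ∧ j ≠ a ∧ j ≠ b then (1:ℝ) else 0) = 0 := by
      apply Finset.sum_eq_zero; intro j _
      rw [if_neg]; rintro ⟨rfl, hja, hjb⟩; tauto
    rw [hz, zero_add]
    rcases hmem with rfl | rfl
    · rw [if_pos rfl, if_neg hab]; norm_num
    · rw [if_neg (Ne.symm hab), if_pos rfl]; norm_num
  · push_neg at hmem
    rw [if_neg hmem.1, if_neg hmem.2]
    have h3 : ∀ j : Fin n, (if j' = j ∧ j ≠ a ∧ j ≠ b then (1:ℝ) else 0) = if j' = j then 1 else 0 := by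
      intro j
      by_cases h : j' = j
      · rw [if_pos h, if_pos ⟨h, by rw [← h]; exact hmem.1, by rw [← h]; exact hmem.2⟩]
      · rw [if_neg h, if_neg (by tauto)]
    simp only [h3]
    rw [Finset.sum_ite_eq]
    simp

lemma Tstep_ne_zero {n : ℕ} (a b : Fin n) (s : Fin n → ZMod 2) (hs : s a = s b)
    {j j' : Fin n} (h : Tstep a b j j' ≠ 0) : s j = s j' := by
  unfold Tstep at h
  by_cases h1 : j ≠ a ∧ j ≠ b
  · rw [if_pos h1] at h
    by_cases h2 : j' = j
    · rw [h2]
    · simp [h2] at h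
  · rw [if_neg h1] at h
    push_neg at h1
    have hj : s j = s a := by
      by_cases hja : j = a
      · rw [hja]
      · rw [h1 hja, ← hs]
    by_cases ha : j' = a
    · rw [hj, ha]
    · by_cases hb : j' = b
      · rw [hj, hb, hs]
      · simp [ha, hb] at h

lemma sum_prod_Tstep {n : ℕ} {ι : Type*} [Fintype ι] [DecidableEq ι] (a b : Fin n) (hab : a ≠ b)
    (t : ι → Fin n) : ∑ g : ι → Fin n, ∏ k, Tstep a b (g k) (t k) = 1 := by
  have h := Finset.prod_univ_sum (fun _ : ι => (univ : Finset (Fin n)))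
    (fun k j => Tstep a b j (t k))
  rw [Fintype.piFinset_univ] at h
  rw [← h]
  simp [sum_Tstep a b hab]

lemma sum_Tkernel {n m d : ℕ} (a b : Fin n) (hab : a ≠ b) (H : Fin m → Fin d → Fin n) :
    ∑ G : Fin m → Fin d → Fin n, Tkernel a b G H = 1 := by
  unfold Tkernel
  have h := Finset.prod_univ_sum (fun _ : Fin m => (univ : Finset (Fin d → Fin n)))
    (fun i g => ∏ k, Tstep a b (g k) (H i k))
  rw [Fintype.piFinset_univ] at h
  rw [← h]
  simp [sum_prod_Tstep a b hab]

/-- For `a ≠ b` and any secret `s` with `s a = s b`, the joint distribution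
of `(T_{a,b}(G), f_{G,P}(s))` for uniform `G` equals that of `(G', f_{G',P}(s))` for
uniform `G'`: the probability of any outcome `(H, y)` agrees. -/
theorem transformed_joint_distribution_eq {n m d : ℕ} (hn : 0 < n)
    (P : (Fin d → ZMod 2) → ZMod 2) (a b : Fin n) (hab : a ≠ b)
    (s : Fin n → ZMod 2) (hs : s a = s b) :
    ∀ (H : Fin m → Fin d → Fin n) (y : Fin m → ZMod 2),
      ∑ G : Fin m → Fin d → Fin n,
          (1 / (Fintype.card (Fin m → Fin d → Fin n) : ℝ)) * Tkernel a b G H *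
            (if (fun i => P (fun k => s (G i k))) = y then 1 else 0)
        = (1 / (Fintype.card (Fin m → Fin d → Fin n) : ℝ)) *
            (if (fun i => P (fun k => s (H i k))) = y then 1 else 0) := by
  intro H y
  have key : ∀ G : Fin m → Fin d → Fin n,
      (1 / (Fintype.card (Fin m → Fin d → Fin n) : ℝ)) * Tkernel a b G H *
        (if (fun i => P (fun k => s (G i k))) = y then 1 else 0)
      = (1 / (Fintype.card (Fin m → Fin d → Fin n) : ℝ)) *
        (if (fun i => P (fun k => s (H i k))) = y then 1 else 0) * Tkernel a b G H := by
    intro G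
    by_cases h : Tkernel a b G H = 0
    · rw [h]; ring
    · have hsk : ∀ i k, s (G i k) = s (H i k) := by
        intro i k
        apply Tstep_ne_zero a b s hs
        have h1 : ∏ i : Fin m, ∏ k : Fin d, Tstep a b (G i k) (H i k) ≠ 0 := h
        rw [Finset.prod_ne_zero_iff] at h1
        have h2 := h1 i (Finset.mem_univ i)
        rw [Finset.prod_ne_zero_iff] at h2
        exact h2 k (Finset.mem_univ k)
      have heq : (fun i => P (fun k => s (G i k))) = (fun i => P (fun k => s (H i k))) := by
        funext i; congr 1; funext k; exact hsk i k
      rw [heq]; ring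
  rw [Finset.sum_congr rfl (fun G _ => key G), ← Finset.mul_sum, sum_Tkernel a b hab H,
    mul_one]
end
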